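/- arXiv:1608.05620 — 2 statements merged into one kernel-verified Lean document; each statement's English description precedes it below -/
import Mathlib

section
/- Let G : ℝ → [0,1] be a distribution function, t₁ < t₂ < ⋯ < t_k positive reals, and u₁, …, u_k ∈ ℝ. Define F_{t₁,…,t_k}(u₁,…,u_k) = G^{t₁}(min(u₁,…,u_k)) · G^{t₂−t₁}(min(u₂,…,u_k)) ⋯ G^{t_k−t_{k−1}}(u_k). Then the family of functions F_{t₁,…,t_k} is a consistent family of finite-dimensional distribution functions; i.e., marginalizing out the j-th coordinate (letting u_j → ∞) of F_{t₁,…,t_k} yields F_{t₁,…,t_{j−1},t_{j+1},…,t_k}. -/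
open Filter

/-- The finite-dimensional distribution functions of an extremal-`G` process:
`F_{t₁,…,t_k}(u₁,…,u_k) = G^{t₁}(⋀_{i≥1} uᵢ) · G^{t₂−t₁}(⋀_{i≥2} uᵢ) ⋯ G^{t_k−t_{k−1}}(u_k)`
(with the convention `t₀ = 0`). -/
noncomputable def extremalFdd (G : ℝ → ℝ) {k : ℕ} (t u : Fin k → ℝ) : ℝ :=
  ∏ i : Fin k,
    G ((Finset.Ici i).inf' ⟨i, Finset.mem_Ici.mpr le_rfl⟩ u) ^
      (t i - if (i : ℕ) = 0 then 0
             else t ⟨(i : ℕ) - 1, Nat.lt_of_le_of_lt (Nat.sub_le _ _) i.isLt⟩)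

lemma aux_inf'_update {n : ℕ} (u : Fin n → ℝ) (j : Fin n) (x : ℝ)
    (hx : ∀ a, u a ≤ x) (S : Finset (Fin n)) (hS : (S.erase j).Nonempty) :
    S.inf' (hS.mono (Finset.erase_subset j S)) (Function.update u j x)
      = (S.erase j).inf' hS u := by
  apply le_antisymm
  · apply Finset.le_inf'
    intro a ha
    have haj : a ≠ j := Finset.ne_of_mem_erase ha
    calc S.inf' _ (Function.update u j x) ≤ Function.update u j x a :=
          Finset.inf'_le _ (Finset.mem_of_mem_erase ha)
      _ = u a := Function.update_of_ne haj _ _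
  · apply Finset.le_inf'
    intro a ha
    rcases eq_or_ne a j with rfl | h
    · obtain ⟨b, hb⟩ := hS
      calc (S.erase a).inf' ⟨b, hb⟩ u ≤ u b := Finset.inf'_le _ hb
        _ ≤ x := hx b
        _ = Function.update u a x a := by simp
    · rw [Function.update_of_ne h]
      exact Finset.inf'_le _ (Finset.mem_erase.mpr ⟨h, ha⟩)

lemma aux_image {k : ℕ} (j : Fin (k + 1)) (i : Fin k) :
    (Finset.Ici i).image j.succAbove = (Finset.Ici (j.succAbove i)).erase j := by
  ext a
  simp only [Finset.mem_image, Finset.mem_Ici, Finset.mem_erase]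
  constructor
  · rintro ⟨b, hb, rfl⟩
    exact ⟨Fin.succAbove_ne j b, (Fin.strictMono_succAbove j).monotone hb⟩
  · rintro ⟨haj, hai⟩
    obtain ⟨b, rfl⟩ := Fin.exists_succAbove_eq haj
    exact ⟨b, (Fin.succAbove_le_succAbove_iff).mp hai, rfl⟩

lemma inf'_set_congr {α β : Type*} [SemilatticeInf β] {S T : Finset α} (h : S = T)
    (hS : S.Nonempty) (f : α → β) : S.inf' hS f = T.inf' (h ▸ hS) f := by
  subst h; rfl

lemma aux_exp {k : ℕ} (t : Fin (k + 1) → ℝ) (j : Fin (k + 1)) (i : Fin k) :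
    ((t ∘ j.succAbove) i - if (i : ℕ) = 0 then 0
        else (t ∘ j.succAbove) ⟨(i : ℕ) - 1, Nat.lt_of_le_of_lt (Nat.sub_le _ _) i.isLt⟩)
    = (t (j.succAbove i) - if ((j.succAbove i : Fin (k + 1)) : ℕ) = 0 then 0
        else t ⟨((j.succAbove i : Fin (k + 1)) : ℕ) - 1,
          Nat.lt_of_le_of_lt (Nat.sub_le _ _) (j.succAbove i).isLt⟩)
      + (if (i : ℕ) = (j : ℕ)
          then t j - if (j : ℕ) = 0 then 0
            else t ⟨(j : ℕ) - 1, Nat.lt_of_le_of_lt (Nat.sub_le _ _) j.isLt⟩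
          else 0) := by
  have ht : ∀ (a b : Fin (k + 1)), (a : ℕ) = (b : ℕ) → t a = t b := by
    intro a b h; congr 1; exact Fin.ext h
  have hIf : ∀ (a : Fin (k + 1)) (pf : (a : ℕ) - 1 < k + 1) (n : ℕ) (hn : n - 1 < k + 1),
      (a : ℕ) = n →
      (if (a : ℕ) = 0 then (0:ℝ) else t ⟨(a : ℕ) - 1, pf⟩)
        = (if n = 0 then 0 else t ⟨n - 1, hn⟩) := by
    rintro a pf n hn rfl; rfl
  simp only [Function.comp_apply]
  rcases lt_trichotomy (i : ℕ) (j : ℕ) with h | h | h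
  · have hs : j.succAbove i = i.castSucc :=
      Fin.succAbove_of_castSucc_lt j i (by rw [Fin.lt_def]; simpa using h)
    have hv : ((j.succAbove i : Fin (k + 1)) : ℕ) = (i : ℕ) := by rw [hs]; simp
    rw [if_neg (by omega : ¬ (i : ℕ) = (j : ℕ)), add_zero]
    rw [hIf _ _ ((i : ℕ)) (by omega) hv]
    congr 1
    by_cases h0 : (i : ℕ) = 0
    · rw [if_pos h0, if_pos h0]
    · rw [if_neg h0, if_neg h0]
      apply ht
      rw [Fin.succAbove_of_castSucc_lt j _ (by rw [Fin.lt_def]; simp; omega)]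
      simp
  · have hs : j.succAbove i = i.succ :=
      Fin.succAbove_of_le_castSucc j i (by rw [Fin.le_def]; simp [h])
    have hv : ((j.succAbove i : Fin (k + 1)) : ℕ) = (i : ℕ) + 1 := by rw [hs]; simp
    rw [if_pos h]
    rw [hIf _ _ ((i : ℕ) + 1) (by omega) hv]
    rw [if_neg (by omega : ¬ (i : ℕ) + 1 = 0)]
    have h1 : t ⟨(i : ℕ) + 1 - 1, by omega⟩ = t j := ht _ _ (by simp [h])
    rw [h1]
    by_cases h0 : (i : ℕ) = 0
    · rw [if_pos h0, if_pos (by omega : (j : ℕ) = 0)]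
      ring
    · rw [if_neg h0, if_neg (by omega : ¬ (j : ℕ) = 0)]
      have h2 : t (j.succAbove ⟨(i : ℕ) - 1, Nat.lt_of_le_of_lt (Nat.sub_le _ _) i.isLt⟩)
          = t ⟨(j : ℕ) - 1, Nat.lt_of_le_of_lt (Nat.sub_le _ _) j.isLt⟩ := by
        apply ht
        rw [Fin.succAbove_of_castSucc_lt j _ (by rw [Fin.lt_def]; simp; omega)]
        simp [h]
      rw [h2]; ring
  · have hs : j.succAbove i = i.succ :=
      Fin.succAbove_of_le_castSucc j i (by rw [Fin.le_def]; simp; omega)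
    have hv : ((j.succAbove i : Fin (k + 1)) : ℕ) = (i : ℕ) + 1 := by rw [hs]; simp
    rw [if_neg (by omega : ¬ (i : ℕ) = (j : ℕ)), add_zero]
    rw [hIf _ _ ((i : ℕ) + 1) (by omega) hv]
    rw [if_neg (by omega : ¬ (i : ℕ) + 1 = 0), if_neg (by omega : ¬ (i : ℕ) = 0)]
    congr 1
    apply ht
    rw [Fin.succAbove_of_le_castSucc j _ (by rw [Fin.le_def]; simp; omega)]
    simp
    omega

lemma aux_key (G : ℝ → ℝ) (hG : ∀ x, G x ∈ Set.Icc (0:ℝ) 1)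
    {k : ℕ} (t u : Fin (k + 1) → ℝ) (ht0 : ∀ i, 0 < t i) (htm : StrictMono t)
    (j : Fin (k + 1)) (x : ℝ) (hx : ∀ a, u a ≤ x) :
    extremalFdd G t (Function.update u j x)
      = (if (j : ℕ) = k then
          G x ^ (t j - if (j : ℕ) = 0 then (0:ℝ)
            else t ⟨(j : ℕ) - 1, Nat.lt_of_le_of_lt (Nat.sub_le _ _) j.isLt⟩)
         else 1)
        * extremalFdd G (t ∘ j.succAbove) (u ∘ j.succAbove) := by
  classical
  have hne : ∀ i : Fin k, ((Finset.Ici (j.succAbove i)).erase j).Nonempty :=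
    fun i => ⟨j.succAbove i, Finset.mem_erase.mpr ⟨Fin.succAbove_ne j i, Finset.mem_Ici.mpr le_rfl⟩⟩
  set B : Fin k → ℝ := fun i => ((Finset.Ici (j.succAbove i)).erase j).inf' (hne i) u with hB
  have hbase1 : ∀ i : Fin k,
      (Finset.Ici (j.succAbove i)).inf' ⟨j.succAbove i, Finset.mem_Ici.mpr le_rfl⟩
        (Function.update u j x) = B i := by
    intro i
    exact aux_inf'_update u j x hx _ (hne i)
  have hbase2 : ∀ i : Fin k,
      (Finset.Ici i).inf' ⟨i, Finset.mem_Ici.mpr le_rfl⟩ (u ∘ j.succAbove) = B i := by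
    intro i
    rw [Finset.inf'_comp_eq_image ⟨i, Finset.mem_Ici.mpr le_rfl⟩ u]
    exact inf'_set_congr (aux_image j i) _ u
  have hE'pos : ∀ i : Fin k,
      0 < (t ∘ j.succAbove) i - (if (i : ℕ) = 0 then 0
        else (t ∘ j.succAbove) ⟨(i : ℕ) - 1, Nat.lt_of_le_of_lt (Nat.sub_le _ _) i.isLt⟩) := by
    intro i
    by_cases h0 : (i : ℕ) = 0
    · rw [if_pos h0]; simpa using ht0 _
    · rw [if_neg h0]
      simp only [Function.comp_apply]
      have hlt : (⟨(i : ℕ) - 1, Nat.lt_of_le_of_lt (Nat.sub_le _ _) i.isLt⟩ : Fin k) < i := by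
        rw [Fin.lt_def]; simp; omega
      have := htm ((Fin.strictMono_succAbove j) hlt)
      linarith
  rw [extremalFdd, extremalFdd]
  have hR : ∏ i : Fin k,
        G ((Finset.Ici i).inf' ⟨i, Finset.mem_Ici.mpr le_rfl⟩ (u ∘ j.succAbove)) ^
          ((t ∘ j.succAbove) i - if (i : ℕ) = 0 then 0
             else (t ∘ j.succAbove) ⟨(i : ℕ) - 1, Nat.lt_of_le_of_lt (Nat.sub_le _ _) i.isLt⟩)
      = (∏ i : Fin k, G (B i) ^
            (t (j.succAbove i) - if ((j.succAbove i : Fin (k + 1)) : ℕ) = 0 then 0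
              else t ⟨((j.succAbove i : Fin (k + 1)) : ℕ) - 1,
                Nat.lt_of_le_of_lt (Nat.sub_le _ _) (j.succAbove i).isLt⟩))
        * ∏ i : Fin k, G (B i) ^
            (if (i : ℕ) = (j : ℕ)
              then t j - if (j : ℕ) = 0 then 0
                else t ⟨(j : ℕ) - 1, Nat.lt_of_le_of_lt (Nat.sub_le _ _) j.isLt⟩
              else 0) := by
    rw [← Finset.prod_mul_distrib]
    apply Finset.prod_congr rfl
    intro i _
    rw [hbase2 i, aux_exp t j i,
      Real.rpow_add' (hG (B i)).1 (by rw [← aux_exp t j i]; exact ne_of_gt (hE'pos i))]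
  rw [hR, Fin.prod_univ_succAbove
    (fun i => G ((Finset.Ici i).inf' ⟨i, Finset.mem_Ici.mpr le_rfl⟩ (Function.update u j x)) ^
      (t i - if (i : ℕ) = 0 then 0
        else t ⟨(i : ℕ) - 1, Nat.lt_of_le_of_lt (Nat.sub_le _ _) i.isLt⟩)) j]
  have hprod1 : ∏ i : Fin k,
      G ((Finset.Ici (j.succAbove i)).inf' ⟨j.succAbove i, Finset.mem_Ici.mpr le_rfl⟩
          (Function.update u j x)) ^
        (t (j.succAbove i) - if ((j.succAbove i : Fin (k + 1)) : ℕ) = 0 then 0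
          else t ⟨((j.succAbove i : Fin (k + 1)) : ℕ) - 1,
            Nat.lt_of_le_of_lt (Nat.sub_le _ _) (j.succAbove i).isLt⟩)
      = ∏ i : Fin k, G (B i) ^
          (t (j.succAbove i) - if ((j.succAbove i : Fin (k + 1)) : ℕ) = 0 then 0
            else t ⟨((j.succAbove i : Fin (k + 1)) : ℕ) - 1,
              Nat.lt_of_le_of_lt (Nat.sub_le _ _) (j.succAbove i).isLt⟩) := by
    apply Finset.prod_congr rfl
    intro i _
    rw [hbase1 i]
  rw [hprod1]
  by_cases h : (j : ℕ) = k
  · -- j is the last index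
    rw [if_pos h]
    have hδ : ∏ i : Fin k, G (B i) ^
        (if (i : ℕ) = (j : ℕ)
          then t j - if (j : ℕ) = 0 then 0
            else t ⟨(j : ℕ) - 1, Nat.lt_of_le_of_lt (Nat.sub_le _ _) j.isLt⟩
          else 0) = 1 := by
      apply Finset.prod_eq_one
      intro i _
      rw [if_neg (by omega : ¬ (i : ℕ) = (j : ℕ)), Real.rpow_zero]
    rw [hδ, mul_one]
    have hxj : (Finset.Ici j).inf' ⟨j, Finset.mem_Ici.mpr le_rfl⟩ (Function.update u j x) = x := by
      apply le_antisymm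
      · calc (Finset.Ici j).inf' _ (Function.update u j x)
            ≤ Function.update u j x j := Finset.inf'_le _ (Finset.mem_Ici.mpr le_rfl)
          _ = x := by simp
      · apply Finset.le_inf'
        intro a ha
        have : a = j := by
          apply Fin.ext
          have h1 := Finset.mem_Ici.mp ha
          rw [Fin.le_def] at h1
          have := a.isLt
          omega
        rw [this]; simp
    rw [hxj]
  · -- j is not the last index
    rw [if_neg h, one_mul]
    have hjk : (j : ℕ) < k := by have := j.isLt; omega
    set j' : Fin k := ⟨(j : ℕ), hjk⟩ with hj'
    have hsj : j.succAbove j' = j'.succ :=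
      Fin.succAbove_of_le_castSucc j j' (by rw [Fin.le_def]; simp [hj'])
    have hδ : ∏ i : Fin k, G (B i) ^
        (if (i : ℕ) = (j : ℕ)
          then t j - if (j : ℕ) = 0 then 0
            else t ⟨(j : ℕ) - 1, Nat.lt_of_le_of_lt (Nat.sub_le _ _) j.isLt⟩
          else 0)
        = G (B j') ^ (t j - if (j : ℕ) = 0 then 0
            else t ⟨(j : ℕ) - 1, Nat.lt_of_le_of_lt (Nat.sub_le _ _) j.isLt⟩) := by
      rw [Finset.prod_eq_single j']
      · rw [if_pos (by simp [hj'])]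
      · intro i _ hi
        rw [if_neg (fun hc => hi (Fin.ext (by simpa [hj'] using hc))), Real.rpow_zero]
      · intro hmem; exact absurd (Finset.mem_univ j') hmem
    rw [hδ]
    have hset : (Finset.Ici j).erase j = (Finset.Ici (j.succAbove j')).erase j := by
      ext a
      rw [hsj]
      simp only [Finset.mem_erase, Finset.mem_Ici, hsj, Fin.le_def, Fin.val_succ, ne_eq,
        Fin.ext_iff, hj', Fin.val_mk]
      constructor
      · rintro ⟨h1, h2⟩; exact ⟨h1, by omega⟩
      · rintro ⟨h1, h2⟩; exact ⟨h1, by omega⟩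
    have hnej : ((Finset.Ici j).erase j).Nonempty := by rw [hset]; exact hne j'
    have hfj : (Finset.Ici j).inf' ⟨j, Finset.mem_Ici.mpr le_rfl⟩ (Function.update u j x)
        = B j' := by
      rw [aux_inf'_update u j x hx _ hnej, hB]
      exact inf'_set_congr hset hnej u
    rw [hfj]
    ring

/-- Consistency of the family `F_{t₁,…,t_k}`: letting `u_j → ∞` in the `j`-th coordinate
recovers the finite-dimensional distribution with time `t_j` removed. -/
theorem stmt_2 (G : ℝ → ℝ) (hmono : Monotone G) (hG : ∀ x, G x ∈ Set.Icc (0 : ℝ) 1)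
    (hlim : Tendsto G atTop (nhds 1))
    (k : ℕ) (t u : Fin (k + 1) → ℝ) (ht0 : ∀ i, 0 < t i) (htm : StrictMono t)
    (j : Fin (k + 1)) :
    Tendsto (fun x => extremalFdd G t (Function.update u j x)) atTop
      (nhds (extremalFdd G (t ∘ j.succAbove) (u ∘ j.succAbove))) := by
  have hM : ∀ᶠ x in atTop, ∀ a, u a ≤ x := by
    rw [eventually_atTop]
    exact ⟨Finset.univ.sup' ⟨j, Finset.mem_univ j⟩ u,
      fun x hx a => le_trans (Finset.le_sup' u (Finset.mem_univ a)) hx⟩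
  have heq : (fun x => extremalFdd G t (Function.update u j x)) =ᶠ[atTop]
      fun x => (if (j : ℕ) = k then
          G x ^ (t j - if (j : ℕ) = 0 then (0:ℝ)
            else t ⟨(j : ℕ) - 1, Nat.lt_of_le_of_lt (Nat.sub_le _ _) j.isLt⟩)
         else 1) * extremalFdd G (t ∘ j.succAbove) (u ∘ j.succAbove) :=
    hM.mono fun x hx => aux_key G hG t u ht0 htm j x hx
  rw [tendsto_congr' heq]
  have h1 : Tendsto (fun x => (if (j : ℕ) = k then
      G x ^ (t j - if (j : ℕ) = 0 then (0:ℝ)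
        else t ⟨(j : ℕ) - 1, Nat.lt_of_le_of_lt (Nat.sub_le _ _) j.isLt⟩)
      else 1)) atTop (nhds 1) := by
    by_cases h : (j : ℕ) = k
    · simp only [if_pos h]
      have := hlim.rpow_const (p := t j - if (j : ℕ) = 0 then (0:ℝ)
        else t ⟨(j : ℕ) - 1, Nat.lt_of_le_of_lt (Nat.sub_le _ _) j.isLt⟩) (Or.inl one_ne_zero)
      simpa using this
    · simp only [if_neg h]; exact tendsto_const_nhds
  have h2 := h1.mul_const (extremalFdd G (t ∘ j.succAbove) (u ∘ j.succAbove))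
  simpa using h2
end

section
/- Let 0 < x₁ < x₂ < ⋯ < x_{2m} and a < b. For successively thinned Poisson processes ξ^{(1)}, …, ξ^{(2m)} on an interval A of length b−a, with ξ^{(2m)}(A) ~ Poisson(x_{2m}(b−a)) and each ξ^{(j)} an independent thinning of ξ^{(j+1)} with retention probability x_j/x_{j+1}, we have μ(⋂_{j=1}^m {ξ^{(2j−1)}(A) = ξ^{(2j)}(A)}) = exp{−(b−a) Σ_{j=1}^m (x_{2j} − x_{2j−1})}. -/
open MeasureTheory ENNReal

namespace Stmt7Aux
noncomputable section

def Bf (P Q : ℕ → ℝ≥0∞) (i n k : ℕ) : ℝ≥0∞ :=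
  (n.choose k : ℝ≥0∞) * P i ^ k * Q i ^ (n - k)

lemma binsum (P Q : ℕ → ℝ≥0∞) (i : ℕ) (w : ℝ≥0∞) (n : ℕ) :
    ∑' k : ℕ, Bf P Q i n k * w ^ k = (Q i + P i * w) ^ n := by
  have h : ∀ k ∉ Finset.range (n+1), Bf P Q i n k * w ^ k = 0 := by
    intro k hk
    simp only [Finset.mem_range, not_lt] at hk
    have : n.choose k = 0 := Nat.choose_eq_zero_of_lt (by omega)
    simp [Bf, this]
  rw [tsum_eq_sum h, add_comm (Q i) (P i * w), add_pow]
  refine Finset.sum_congr rfl fun k hk => ?_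
  simp only [Bf, mul_pow]
  ring

lemma binsum1 (P Q : ℕ → ℝ≥0∞) (hPQ : ∀ i, P i + Q i = 1) (i : ℕ) (n : ℕ) :
    ∑' k : ℕ, Bf P Q i n k = 1 := by
  have := binsum P Q i 1 n
  simp only [one_pow, mul_one] at this
  rw [this, add_comm, hPQ i, one_pow]

def consEquiv (n : ℕ) : ℕ × (Fin n → ℕ) ≃ (Fin (n+1) → ℕ) where
  toFun p := Fin.cons p.1 p.2
  invFun t := (t 0, fun i => t i.succ)
  left_inv := by rintro ⟨a, f⟩; simp
  right_inv := by
    intro t; funext i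
    refine Fin.cases ?_ (fun j => ?_) i <;> simp

lemma tsum_consEquiv {n : ℕ} (f : (Fin (n+1) → ℕ) → ℝ≥0∞) :
    ∑' t : Fin (n+1) → ℕ, f t = ∑' (a : ℕ) (g : Fin n → ℕ), f (Fin.cons a g) := by
  rw [← (consEquiv n).tsum_eq, ENNReal.tsum_prod']
  rfl

lemma chainsum (Pois : ℕ → ℝ≥0∞) :
    ∀ (L : ℕ) (P Q : ℕ → ℝ≥0∞), (∀ i, P i + Q i = 1) →
    ∑' t : Fin (L+1) → ℕ, (Pois (t (Fin.last L)) *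
      ∏ i : Fin L, Bf P Q i (t i.succ) (t i.castSucc)) = ∑' n, Pois n := by
  intro L
  induction L with
  | zero =>
      intro P Q hPQ
      rw [← (Equiv.funUnique (Fin 1) ℕ).symm.tsum_eq]
      simp
  | succ L ih =>
      intro P Q hPQ
      rw [tsum_consEquiv, ENNReal.tsum_comm]
      have key : ∀ g : Fin (L+1) → ℕ,
          (∑' a : ℕ, Pois ((Fin.cons a g : Fin (L+2) → ℕ) (Fin.last (L+1))) *
            ∏ i : Fin (L+1), Bf P Q i ((Fin.cons a g : Fin (L+2) → ℕ) i.succ)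
              ((Fin.cons a g : Fin (L+2) → ℕ) i.castSucc))
          = Pois (g (Fin.last L)) *
            ∏ i : Fin L, Bf (fun j => P (j+1)) (fun j => Q (j+1)) i (g i.succ) (g i.castSucc) := by
        intro g
        have h1 : ∀ a : ℕ,
            Pois ((Fin.cons a g : Fin (L+2) → ℕ) (Fin.last (L+1))) *
              ∏ i : Fin (L+1), Bf P Q i ((Fin.cons a g : Fin (L+2) → ℕ) i.succ)
                ((Fin.cons a g : Fin (L+2) → ℕ) i.castSucc)
            = (Pois (g (Fin.last L)) *
                ∏ i : Fin L, Bf (fun j => P (j+1)) (fun j => Q (j+1)) i (g i.succ) (g i.castSucc))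
              * Bf P Q 0 (g 0) a := by
          intro a
          rw [Fin.prod_univ_succ]
          simp only [← Fin.succ_last, ← Fin.succ_castSucc, Fin.cons_succ, Fin.castSucc_zero,
            Fin.cons_zero]
          have hBf : ∀ i : Fin L,
              Bf P Q (i.succ) (g i.succ) (g i.castSucc)
              = Bf (fun j => P (j+1)) (fun j => Q (j+1)) i (g i.succ) (g i.castSucc) := by
            intro i
            simp [Bf, Fin.val_succ]
          rw [Finset.prod_congr rfl (fun i _ => hBf i)]
          simp only [Fin.val_zero]
          ring
        rw [tsum_congr h1, ENNReal.tsum_mul_left, binsum1 P Q hPQ 0, mul_one]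
      rw [tsum_congr key]
      exact ih (fun j => P (j+1)) (fun j => Q (j+1)) (fun i => hPQ (i+1))


/-- accumulated per-particle retention probability for the paired chain -/
def RR : ℕ → (ℕ → ℝ≥0∞) → (ℕ → ℝ≥0∞) → ℝ≥0∞ → ℝ≥0∞
  | 0, P, _, z => z * P 0
  | (M+1), P, Q, z => RR M (fun i => P (i+2)) (fun i => Q (i+2)) (Q 1 + P 1 * (z * P 0))

lemma pairedsum (Pois : ℕ → ℝ≥0∞) :
    ∀ (M : ℕ) (P Q : ℕ → ℝ≥0∞) (z : ℝ≥0∞),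
    ∑' k : Fin (M+1) → ℕ, (Pois (k (Fin.last M)) * z ^ (k 0) *
      (∏ r : Fin (M+1), P (2*(r:ℕ)) ^ (k r)) *
      ∏ r : Fin M, Bf P Q (2*(r:ℕ)+1) (k r.succ) (k r.castSucc))
    = ∑' n, Pois n * (RR M P Q z) ^ n := by
  intro M
  induction M with
  | zero =>
      intro P Q z
      rw [← (Equiv.funUnique (Fin 1) ℕ).symm.tsum_eq]
      refine tsum_congr fun n => ?_
      simp [RR, mul_pow]
      ring
  | succ M ih =>
      intro P Q z
      rw [tsum_consEquiv, ENNReal.tsum_comm]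
      have key : ∀ g : Fin (M+1) → ℕ,
          (∑' a : ℕ, ((Pois ((Fin.cons a g : Fin (M+2) → ℕ) (Fin.last (M+1))) *
              z ^ ((Fin.cons a g : Fin (M+2) → ℕ) 0) *
            (∏ r : Fin (M+2), P (2*(r:ℕ)) ^ ((Fin.cons a g : Fin (M+2) → ℕ) r)) *
            ∏ r : Fin (M+1), Bf P Q (2*(r:ℕ)+1) ((Fin.cons a g : Fin (M+2) → ℕ) r.succ)
              ((Fin.cons a g : Fin (M+2) → ℕ) r.castSucc))))
          = Pois (g (Fin.last M)) * (Q 1 + P 1 * (z * P 0)) ^ (g 0) *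
            (∏ r : Fin (M+1), (fun i => P (i+2)) (2*(r:ℕ)) ^ (g r)) *
            ∏ r : Fin M, Bf (fun i => P (i+2)) (fun i => Q (i+2)) (2*(r:ℕ)+1)
              (g r.succ) (g r.castSucc) := by
        intro g
        have h1 : ∀ a : ℕ,
            (Pois ((Fin.cons a g : Fin (M+2) → ℕ) (Fin.last (M+1))) *
              z ^ ((Fin.cons a g : Fin (M+2) → ℕ) 0) *
            (∏ r : Fin (M+2), P (2*(r:ℕ)) ^ ((Fin.cons a g : Fin (M+2) → ℕ) r)) *
            ∏ r : Fin (M+1), Bf P Q (2*(r:ℕ)+1) ((Fin.cons a g : Fin (M+2) → ℕ) r.succ)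
              ((Fin.cons a g : Fin (M+2) → ℕ) r.castSucc))
            = (Pois (g (Fin.last M)) *
                (∏ r : Fin (M+1), (fun i => P (i+2)) (2*(r:ℕ)) ^ (g r)) *
                ∏ r : Fin M, Bf (fun i => P (i+2)) (fun i => Q (i+2)) (2*(r:ℕ)+1)
                  (g r.succ) (g r.castSucc))
              * (Bf P Q 1 (g 0) a * (z * P 0) ^ a) := by
          intro a
          have hlast : (Fin.cons a g : Fin (M+2) → ℕ) (Fin.last (M+1)) = g (Fin.last M) := by
            rw [← Fin.succ_last]; exact Fin.cons_succ _ _ _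
          have hzero : (Fin.cons a g : Fin (M+2) → ℕ) 0 = a := rfl
          have hPprod : (∏ r : Fin (M+2), P (2*(r:ℕ)) ^ ((Fin.cons a g : Fin (M+2) → ℕ) r))
              = P 0 ^ a * ∏ r : Fin (M+1), (fun i => P (i+2)) (2*(r:ℕ)) ^ (g r) := by
            rw [Fin.prod_univ_succ]
            refine congr_arg₂ HMul.hMul (by simp) ?_
            refine Finset.prod_congr rfl fun r _ => ?_
            · rw [Fin.cons_succ]
              have h2 : 2*((r:ℕ)+1) = 2*(r:ℕ)+2 := by ring
              rw [Fin.val_succ, h2]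
          have hBprod : (∏ r : Fin (M+1), Bf P Q (2*(r:ℕ)+1)
                ((Fin.cons a g : Fin (M+2) → ℕ) r.succ)
                ((Fin.cons a g : Fin (M+2) → ℕ) r.castSucc))
              = Bf P Q 1 (g 0) a *
                ∏ r : Fin M, Bf (fun i => P (i+2)) (fun i => Q (i+2)) (2*(r:ℕ)+1)
                  (g r.succ) (g r.castSucc) := by
            rw [Fin.prod_univ_succ]
            refine congr_arg₂ HMul.hMul (by simp) ?_
            refine Finset.prod_congr rfl fun r _ => ?_
            · have e1 : (Fin.cons a g : Fin (M+2) → ℕ) (r.succ.succ) = g r.succ :=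
                Fin.cons_succ _ _ _
              have e2 : (Fin.cons a g : Fin (M+2) → ℕ) (r.succ.castSucc) = g r.castSucc := by
                rw [← Fin.succ_castSucc]; exact Fin.cons_succ _ _ _
              rw [e1, e2]
              have h2 : 2*((r:ℕ)+1)+1 = (2*(r:ℕ)+1)+2 := by ring
              rw [Fin.val_succ, h2]
              rfl
          rw [hlast, hzero, hPprod, hBprod, mul_pow]
          ring
        rw [tsum_congr h1, ENNReal.tsum_mul_left, binsum P Q 1 (z * P 0) (g 0)]
        ring
      rw [tsum_congr key]
      exact ih (fun i => P (i+2)) (fun i => Q (i+2)) (Q 1 + P 1 * (z * P 0))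


lemma RR_closed :
    ∀ (M : ℕ) (y : ℕ → ℝ), (∀ i, 0 < y i) → (∀ i, y i ≤ y (i+1)) →
      ∀ z : ℝ, 0 ≤ z → z ≤ 1 →
      RR M (fun i => ENNReal.ofReal (y i / y (i+1)))
        (fun i => ENNReal.ofReal (1 - y i / y (i+1))) (ENNReal.ofReal z)
      = ENNReal.ofReal ((y (2*M+1) - (∑ j ∈ Finset.range (M+1), (y (2*j+1) - y (2*j)))
          + (z - 1) * y 0) / y (2*M+1)) := by
  intro M
  induction M with
  | zero =>
      intro y hy hmono z hz0 hz1
      have h1 : (0:ℝ) < y 1 := hy 1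
      show ENNReal.ofReal z * ENNReal.ofReal (y 0 / y 1) = _
      rw [← ENNReal.ofReal_mul hz0]
      congr 1
      norm_num [Finset.sum_range_one]
      field_simp
      ring
  | succ M ih =>
      intro y hy hmono z hz0 hz1
      have hy0 := hy 0; have hy1 := hy 1; have hy2 := hy 2
      have h01 := hmono 0; have h12 := hmono 1
      set z' : ℝ := (y 2 - y 1 + z * y 0) / y 2 with hz'def
      have hz'0 : 0 ≤ z' := by
        apply div_nonneg _ (le_of_lt hy2)
        nlinarith
      have hz'1 : z' ≤ 1 := by
        rw [div_le_one hy2]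
        nlinarith
      have hq : ENNReal.ofReal (1 - y 1 / y 2) + ENNReal.ofReal (y 1 / y 2) *
          (ENNReal.ofReal z * ENNReal.ofReal (y 0 / y 1)) = ENNReal.ofReal z' := by
        rw [← ENNReal.ofReal_mul hz0, ← ENNReal.ofReal_mul (by positivity),
          ← ENNReal.ofReal_add (by rw [sub_nonneg, div_le_one hy2]; exact h12) (by positivity)]
        congr 1
        have h2ne : y 2 ≠ 0 := ne_of_gt hy2
        have h1ne : y 1 ≠ 0 := ne_of_gt hy1
        rw [eq_div_iff h2ne]
        field_simp
      simp only [RR]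
      rw [hq]
      have := ih (fun i => y (i+2)) (fun i => hy (i+2)) (fun i => hmono (i+2)) z' hz'0 hz'1
      rw [this]
      congr 1
      have hnum : ∑ j ∈ Finset.range (M+1+1), (y (2*j+1) - y (2*j))
          = (∑ j ∈ Finset.range (M+1), (y (2*j+1+2) - y (2*j+2))) + (y 1 - y 0) := by
        rw [Finset.sum_range_succ']
        refine congr_arg₂ HAdd.hAdd ?_ (by norm_num)
        refine Finset.sum_congr rfl fun j _ => ?_
        rw [show 2*(j+1)+1 = 2*j+1+2 from by ring, show 2*(j+1) = 2*j+2 from by ring]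
      have hz'e : (z' - 1) * y 2 = z * y 0 - y 1 := by
        rw [hz'def]
        have h2ne : y 2 ≠ 0 := ne_of_gt hy2
        field_simp
        ring
      show ((y (2*M+1+2) - ∑ j ∈ Finset.range (M+1), (y (2*j+1+2) - y (2*j+2))
          + (z'-1) * y 2) / y (2*M+1+2)) = _
      rw [show 2*(M+1)+1 = 2*M+1+2 from by ring, hnum, hz'e]
      ring

lemma poisE_sum (lam : ℝ) (hlam : 0 ≤ lam) (r : ℝ) (hr : 0 ≤ r) :
    ∑' n : ℕ, ENNReal.ofReal (lam ^ n * Real.exp (-lam) / n.factorial) *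
        (ENNReal.ofReal r) ^ n
      = ENNReal.ofReal (Real.exp (lam * r - lam)) := by
  have h1 : ∀ n : ℕ, ENNReal.ofReal (lam ^ n * Real.exp (-lam) / n.factorial) *
        (ENNReal.ofReal r) ^ n
      = ENNReal.ofReal ((lam * r) ^ n / n.factorial * Real.exp (-lam)) := by
    intro n
    rw [← ENNReal.ofReal_pow hr, ← ENNReal.ofReal_mul (by positivity)]
    congr 1
    rw [mul_pow]
    ring
  rw [tsum_congr h1, ← ENNReal.ofReal_tsum_of_nonneg (fun n => by positivity)
    ((Real.summable_pow_div_factorial (lam*r)).mul_right _)]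
  congr 1
  rw [tsum_mul_right]
  have : ∑' n : ℕ, (lam*r) ^ n / n.factorial = Real.exp (lam * r) := by
    rw [Real.exp_eq_exp_ℝ, NormedSpace.exp_eq_tsum_div]
  rw [this, ← Real.exp_add]
  ring_nf


lemma Bf_self (P Q : ℕ → ℝ≥0∞) (i n : ℕ) : Bf P Q i n n = P i ^ n := by
  simp [Bf]

lemma prodsplit (f : ℕ → ℝ≥0∞) : ∀ M : ℕ, ∏ i ∈ Finset.range (2*M+1), f i
    = (∏ r ∈ Finset.range (M+1), f (2*r)) * ∏ r ∈ Finset.range M, f (2*r+1) := by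
  intro M
  induction M with
  | zero => simp
  | succ M ih =>
      rw [show 2*(M+1)+1 = (2*M+1)+1+1 from by ring, Finset.prod_range_succ,
        Finset.prod_range_succ, ih, Finset.prod_range_succ (fun r => f (2*r)) (M+1),
        Finset.prod_range_succ (fun r => f (2*r+1)) M,
        show 2*M+1+1 = 2*(M+1) from by ring]
      ring

/-- total extension of a tuple -/
def extT (n : ℕ) (t : Fin n → ℕ) : ℕ → ℕ := fun i => if h : i < n then t ⟨i, h⟩ else 0

lemma extT_lt {n : ℕ} (t : Fin n → ℕ) {i : ℕ} (h : i < n) : extT n t i = t ⟨i, h⟩ := dif_pos h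

/-- doubling map -/
def dblT (M : ℕ) (k : Fin (M+1) → ℕ) : Fin (2*M+2) → ℕ :=
  fun i => k ⟨i.1/2, by omega⟩


end
end Stmt7Aux

open Stmt7Aux in
/-- For successively thinned Poisson processes `ξ⁽⁰⁾,…,ξ⁽²ᵐ⁻¹⁾` (indices shifted by one
from the paper) on an interval of length `b−a`, with `ξ⁽²ᵐ⁻¹⁾(A) ~ Poisson(x_{2m−1}(b−a))`
and each `ξ⁽ⁱ⁾` an independent thinning of `ξ⁽ⁱ⁺¹⁾` with retention probability
`xᵢ/xᵢ₊₁` (encoded via the full Markov-chain joint law below), we have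
`μ(⋂_{j=0}^{m−1} {ξ⁽²ʲ⁾(A) = ξ⁽²ʲ⁺¹⁾(A)}) = exp{−(b−a) Σ_{j=0}^{m−1} (x_{2j+1} − x_{2j})}`. -/
theorem stmt_7 {Ω : Type*} [MeasurableSpace Ω] (μ : Measure Ω) [IsProbabilityMeasure μ]
    (m : ℕ) (hm : 0 < m) (N : ℕ → Ω → ℕ) (x : ℕ → ℝ) (a b : ℝ) (hab : a < b)
    (hx0 : 0 < x 0) (hxmono : ∀ i, i + 1 < 2 * m → x i < x (i + 1))
    (hjoint : ∀ j : ℕ → ℕ,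
      (μ {ω | ∀ i < 2 * m, N i ω = j i}).toReal =
        ((x (2 * m - 1) * (b - a)) ^ j (2 * m - 1) *
            Real.exp (-(x (2 * m - 1) * (b - a))) / (j (2 * m - 1)).factorial) *
          ∏ i ∈ Finset.range (2 * m - 1),
            ((j (i + 1)).choose (j i) * (x i / x (i + 1)) ^ j i *
              (1 - x i / x (i + 1)) ^ (j (i + 1) - j i))) :
    (μ (⋂ j ∈ Finset.range m, {ω | N (2 * j) ω = N (2 * j + 1) ω})).toReal =
      Real.exp (-((b - a) * ∑ j ∈ Finset.range m, (x (2 * j + 1) - x (2 * j)))) := by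
  obtain ⟨M, rfl⟩ : ∃ M, m = M + 1 := ⟨m - 1, by omega⟩
  clear hm
  -- basic positivity / monotonicity facts
  have hxpos : ∀ i, i ≤ 2*M+1 → 0 < x i := by
    intro i hi
    induction i with
    | zero => exact hx0
    | succ n ihn => exact lt_trans (ihn (by omega)) (hxmono n (by omega))
  have hxle : ∀ i j, i ≤ j → j ≤ 2*M+1 → x i ≤ x j := by
    intro i j hij hj
    induction j with
    | zero => simp_all
    | succ n ihn =>
        rcases Nat.lt_or_ge i (n+1) with h | h
        · exact le_trans (ihn (by omega) (by omega)) (le_of_lt (hxmono n (by omega)))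
        · have : i = n+1 := by omega
          simp [this]
  set y : ℕ → ℝ := fun i => x (min i (2*M+1)) with hy_def
  have hypos : ∀ i, 0 < y i := fun i => hxpos _ (min_le_right _ _)
  have hymono : ∀ i, y i ≤ y (i+1) :=
    fun i => hxle _ _ (by omega) (min_le_right _ _)
  have hyeq : ∀ i, i ≤ 2*M+1 → y i = x i := by
    intro i hi; simp [hy_def, min_eq_left hi]
  set P : ℕ → ℝ≥0∞ := fun i => ENNReal.ofReal (y i / y (i+1)) with hP_def
  set Q : ℕ → ℝ≥0∞ := fun i => ENNReal.ofReal (1 - y i / y (i+1)) with hQ_def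
  have hPQ : ∀ i, P i + Q i = 1 := by
    intro i
    have h0 : 0 ≤ y i / y (i+1) := le_of_lt (div_pos (hypos i) (hypos (i+1)))
    have h1 : y i / y (i+1) ≤ 1 := (div_le_one (hypos (i+1))).2 (hymono i)
    rw [hP_def, hQ_def, ← ENNReal.ofReal_add h0 (by linarith)]
    norm_num
  set lam : ℝ := x (2*M+1) * (b - a) with hlam_def
  have hba : (0:ℝ) < b - a := by linarith
  have hlam : 0 ≤ lam := le_of_lt (mul_pos (hxpos _ le_rfl) hba)
  set Pois : ℕ → ℝ≥0∞ :=
    fun n => ENNReal.ofReal (lam ^ n * Real.exp (-lam) / n.factorial) with hPois_def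
  set F : (Fin (2*M+2) → ℕ) → ℝ≥0∞ := fun t =>
    Pois (t (Fin.last (2*M+1))) *
      ∏ i : Fin (2*M+1), Bf P Q i.1 (t i.succ) (t i.castSucc) with hF_def
  set A : (Fin (2*M+2) → ℕ) → Set Ω := fun t =>
    {ω | ∀ i < 2 * (M+1), N i ω = extT (2*M+2) t i} with hA_def
  -- the measure of each atom
  have hμA : ∀ t, μ (A t) = F t := by
    intro t
    have hj := hjoint (extT (2*M+2) t)
    rw [show 2*(M+1)-1 = 2*M+1 from by omega] at hj
    have hAT : μ (A t) = ENNReal.ofReal ((μ (A t)).toReal) :=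
      (ENNReal.ofReal_toReal (measure_ne_top μ _)).symm
    rw [hAT]
    simp only [hA_def]
    rw [hj]
    have hx2M1 : (0:ℝ) < x (2*M+1) := hxpos _ le_rfl
    have hnn1 : 0 ≤ (x (2*M+1) * (b-a)) ^ (extT (2*M+2) t (2*M+1)) *
        Real.exp (-(x (2*M+1)*(b-a))) / ((extT (2*M+2) t (2*M+1)).factorial : ℝ) := by
      positivity
    rw [ENNReal.ofReal_mul hnn1]
    have hqnn : ∀ i : ℕ, i < 2*M+1 → (0:ℝ) ≤ 1 - x i / x (i+1) := by
      intro i hi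
      have h1 : (0:ℝ) < x (i+1) := hxpos _ (by omega)
      have h2 : x i ≤ x (i+1) := le_of_lt (hxmono i (by omega))
      have := (div_le_one h1).2 h2
      linarith
    have hpnn : ∀ i : ℕ, i < 2*M+1 → (0:ℝ) ≤ x i / x (i+1) := by
      intro i hi
      exact le_of_lt (div_pos (hxpos _ (by omega)) (hxpos _ (by omega)))
    congr 1
    · rw [extT_lt t (show 2*M+1 < 2*M+2 by omega)]
      rfl
    · rw [ENNReal.ofReal_prod_of_nonneg (fun i hi => by
        have hi' : i < 2*M+1 := Finset.mem_range.1 hi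
        exact mul_nonneg (mul_nonneg (Nat.cast_nonneg _)
          (pow_nonneg (hpnn i hi') _)) (pow_nonneg (hqnn i hi') _))]
      rw [← Fin.prod_univ_eq_prod_range]
      refine Finset.prod_congr rfl fun i _ => ?_
      have e1 : extT (2*M+2) t (i.1+1) = t i.succ := extT_lt t (by omega)
      have e2 : extT (2*M+2) t i.1 = t i.castSucc := extT_lt t (by omega)
      have ex1 : x i.1 / x (i.1+1) = y i.1 / y (i.1+1) := by
        rw [hyeq i.1 (by omega), hyeq (i.1+1) (by omega)]
      rw [e1, e2, ex1]
      rw [ENNReal.ofReal_mul (by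
        have := hpnn i.1 i.2
        rw [ex1] at this
        exact mul_nonneg (Nat.cast_nonneg _) (pow_nonneg this _))]
      rw [ENNReal.ofReal_mul (Nat.cast_nonneg _)]
      have hp' : (0:ℝ) ≤ y i.1 / y (i.1+1) := by
        have := hpnn i.1 i.2; rwa [ex1] at this
      have hq' : (0:ℝ) ≤ 1 - y i.1 / y (i.1+1) := by
        have := hqnn i.1 i.2
        rw [show (1:ℝ) - x i.1 / x (i.1+1) = 1 - y i.1 / y (i.1+1) from by rw [ex1]] at this
        exact this
      rw [ENNReal.ofReal_pow hp', ENNReal.ofReal_pow hq', ENNReal.ofReal_natCast]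
      rfl
  -- partition facts
  set S : Set (Fin (2*M+2) → ℕ) :=
    {t | ∀ j : Fin (M+1), t ⟨2*j.1, by omega⟩ = t ⟨2*j.1+1, by omega⟩} with hS_def
  set E : Set Ω := ⋂ j ∈ Finset.range (M+1), {ω | N (2 * j) ω = N (2 * j + 1) ω} with hE_def
  set tup : Ω → (Fin (2*M+2) → ℕ) := fun ω i => N i.1 ω with htup_def
  have hA_tup : ∀ ω, ω ∈ A (tup ω) := by
    intro ω i hi
    rw [extT_lt _ (show i < 2*M+2 by omega)]
  have hA_eq : ∀ ω t, ω ∈ A t → t = tup ω := by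
    intro ω t hω
    funext i
    have := hω i.1 (by omega)
    rw [extT_lt _ i.2] at this
    simpa [htup_def] using this.symm
  have hSmem : ∀ ω, tup ω ∈ S ↔ ω ∈ E := by
    intro ω
    simp only [hS_def, hE_def, Set.mem_setOf_eq, Set.mem_iInter, Finset.mem_range]
    constructor
    · intro h j hj; exact h ⟨j, hj⟩
    · intro h j; exact h j.1 j.2
  have hE : E = ⋃ t : S, A t.1 := by
    ext ω
    simp only [Set.mem_iUnion]
    constructor
    · intro h; exact ⟨⟨tup ω, (hSmem ω).2 h⟩, hA_tup ω⟩
    · rintro ⟨⟨t, ht⟩, hω⟩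
      have := hA_eq ω t hω
      subst this
      exact (hSmem ω).1 ht
  have hEc : Eᶜ = ⋃ t : ↥Sᶜ, A t.1 := by
    ext ω
    simp only [Set.mem_iUnion, Set.mem_compl_iff]
    constructor
    · intro h
      refine ⟨⟨tup ω, fun hS => h ((hSmem ω).1 hS)⟩, hA_tup ω⟩
    · rintro ⟨⟨t, ht⟩, hω⟩ hE'
      have := hA_eq ω t hω
      subst this
      exact ht ((hSmem ω).2 hE')
  -- total mass is one
  have htot : ∑' t : Fin (2*M+2) → ℕ, F t = 1 := by
    have hc := chainsum Pois (2*M+1) P Q hPQ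
    have hp := poisE_sum lam hlam 1 zero_le_one
    simp only [ENNReal.ofReal_one, one_pow, mul_one, sub_self, Real.exp_zero] at hp
    exact hc.trans hp
  -- the sandwich
  have hsplit : (∑' t : S, F t.1) + (∑' t : ↥Sᶜ, F t.1) = 1 := by
    rw [Summable.tsum_add_tsum_compl ENNReal.summable ENNReal.summable, htot]
  have hle1 : μ E ≤ ∑' t : S, F t.1 := by
    rw [hE]
    refine le_trans (measure_iUnion_le _) ?_
    exact le_of_eq (tsum_congr fun t => hμA t.1)
  have hle2 : μ Eᶜ ≤ ∑' t : ↥Sᶜ, F t.1 := by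
    rw [hEc]
    refine le_trans (measure_iUnion_le _) ?_
    exact le_of_eq (tsum_congr fun t => hμA t.1)
  have hbne : (∑' t : ↥Sᶜ, F t.1) ≠ ⊤ := by
    intro h
    rw [h] at hsplit
    simp at hsplit
  have hμE : μ E = ∑' t : S, F t.1 := by
    refine le_antisymm hle1 ?_
    have h1 : (1:ℝ≥0∞) ≤ μ E + μ Eᶜ := by
      calc (1:ℝ≥0∞) = μ Set.univ := (measure_univ).symm
        _ = μ (E ∪ Eᶜ) := by rw [Set.union_compl_self]
        _ ≤ μ E + μ Eᶜ := measure_union_le _ _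
    have h2 : (∑' t : S, F t.1) + (∑' t : ↥Sᶜ, F t.1) ≤ μ E + (∑' t : ↥Sᶜ, F t.1) := by
      rw [hsplit]
      exact le_trans h1 (add_le_add_right hle2 _)
    exact (ENNReal.add_le_add_iff_right hbne).1 h2
  -- compute the paired sum
  have hpair : (∑' t : S, F t.1)
      = ∑' n, Pois n * (RR M P Q 1) ^ n := by
    have hdbl_mem : ∀ k : Fin (M+1) → ℕ, dblT M k ∈ S := by
      intro k j
      simp only [dblT]
      congr 1
      exact Fin.ext (show (2*j.1)/2 = (2*j.1+1)/2 by omega)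
    let e : (Fin (M+1) → ℕ) ≃ S :=
      { toFun := fun k => ⟨dblT M k, hdbl_mem k⟩
        invFun := fun t r => t.1 ⟨2*r.1, by omega⟩
        left_inv := by
          intro k; funext r
          simp only [dblT]
          congr 1
          exact Fin.ext (show (2*r.1)/2 = r.1 by omega)
        right_inv := by
          rintro ⟨t, ht⟩
          apply Subtype.ext
          funext i
          show t ⟨2*(i.1/2), by omega⟩ = t i
          rcases Nat.even_or_odd i.1 with ⟨q, hq⟩ | ⟨q, hq⟩
          · congr 1
            exact Fin.ext (show 2*(i.1/2) = i.1 by omega)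
          · have h1 : (⟨2*(i.1/2), by omega⟩ : Fin (2*M+2)) = ⟨2*q, by omega⟩ :=
              Fin.ext (show 2*(i.1/2) = 2*q by omega)
            have h2 := ht ⟨q, by omega⟩
            rw [h1, h2]
            congr 1
            exact Fin.ext (show 2*q+1 = i.1 by omega) }
    have hFd : ∀ k : Fin (M+1) → ℕ, F (dblT M k)
        = Pois (k (Fin.last M)) * (1:ℝ≥0∞) ^ (k 0) *
          (∏ r : Fin (M+1), P (2*(r:ℕ)) ^ (k r)) *
          ∏ r : Fin M, Bf P Q (2*(r:ℕ)+1) (k r.succ) (k r.castSucc) := by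
      intro k
      set kk : ℕ → ℕ := fun r => k ⟨min r M, by omega⟩ with hkk_def
      have hkk : ∀ r : Fin (M+1), kk r.1 = k r := by
        intro r
        simp only [hkk_def]
        congr 1
        exact Fin.ext (show min r.1 M = r.1 by omega)
      have hd : ∀ i : Fin (2*M+2), dblT M k i = kk (i.1/2) := by
        intro i
        simp only [dblT, hkk_def]
        congr 1
        exact Fin.ext (show i.1/2 = min (i.1/2) M by omega)
      have htop : dblT M k (Fin.last (2*M+1)) = k (Fin.last M) := by
        rw [hd]
        show kk ((2*M+1)/2) = _
        rw [show (2*M+1)/2 = M by omega]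
        exact hkk (Fin.last M)
      have hprod : (∏ i : Fin (2*M+1), Bf P Q i.1 (dblT M k i.succ) (dblT M k i.castSucc))
          = (∏ r : Fin (M+1), P (2*(r:ℕ)) ^ (k r)) *
            ∏ r : Fin M, Bf P Q (2*(r:ℕ)+1) (k r.succ) (k r.castSucc) := by
        set g : ℕ → ℝ≥0∞ := fun n => Bf P Q n (kk ((n+1)/2)) (kk (n/2)) with hg_def
        have step1 : (∏ i : Fin (2*M+1), Bf P Q i.1 (dblT M k i.succ) (dblT M k i.castSucc))
            = ∏ i : Fin (2*M+1), g i.1 := by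
          refine Finset.prod_congr rfl fun i _ => ?_
          rw [hd, hd]
          rfl
        rw [step1, Fin.prod_univ_eq_prod_range, prodsplit]
        congr 1
        · rw [← Fin.prod_univ_eq_prod_range (fun r => g (2*r))]
          refine Finset.prod_congr rfl fun r _ => ?_
          show Bf P Q (2*r.1) (kk ((2*r.1+1)/2)) (kk ((2*r.1)/2)) = P (2*(r:ℕ)) ^ (k r)
          rw [show (2*r.1+1)/2 = r.1 by omega, show (2*r.1)/2 = r.1 by omega, hkk r, Bf_self]
        · rw [← Fin.prod_univ_eq_prod_range (fun r => g (2*r+1))]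
          refine Finset.prod_congr rfl fun r _ => ?_
          show Bf P Q (2*r.1+1) (kk ((2*r.1+1+1)/2)) (kk ((2*r.1+1)/2)) = _
          rw [show (2*r.1+1+1)/2 = r.1+1 by omega, show (2*r.1+1)/2 = r.1 by omega]
          have e1 : kk (r.1+1) = k r.succ := by
            simp only [hkk_def]
            congr 1
            exact Fin.ext (show min (r.1+1) M = r.1+1 by omega)
          have e2 : kk r.1 = k r.castSucc := by
            simp only [hkk_def]
            congr 1
            exact Fin.ext (show min r.1 M = r.1 by omega)
          rw [e1, e2]
      show Pois (dblT M k (Fin.last (2*M+1))) *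
          (∏ i : Fin (2*M+1), Bf P Q i.1 (dblT M k i.succ) (dblT M k i.castSucc)) = _
      rw [htop, hprod, one_pow, mul_one]
      ring
    rw [← Equiv.tsum_eq e (fun t : S => F t.1)]
    refine (tsum_congr fun k => ?_).trans (pairedsum Pois M P Q 1)
    exact hFd k
  -- evaluate RR and the Poisson sum
  have hRR : RR M P Q 1
      = ENNReal.ofReal ((y (2*M+1) - (∑ j ∈ Finset.range (M+1), (y (2*j+1) - y (2*j))))
          / y (2*M+1)) := by
    have := RR_closed M y hypos hymono 1 zero_le_one le_rfl
    rw [hP_def, hQ_def, ← ENNReal.ofReal_one, this]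
    norm_num
  -- final computation
  have hyK : y (2*M+1) = x (2*M+1) := hyeq _ le_rfl
  have hy22 : y (2*M+2) = y (2*M+1) := by
    simp only [hy_def]
    congr 1
    omega
  have hSyle : ∀ n : ℕ, (∑ j ∈ Finset.range n, (y (2*j+1) - y (2*j))) + y 0 ≤ y (2*n) := by
    intro n
    induction n with
    | zero => simp
    | succ n ihn =>
        rw [Finset.sum_range_succ, show 2*(n+1) = 2*n+1+1 from by ring]
        have h1 := hymono (2*n+1)
        linarith
  have hSy1 : (∑ j ∈ Finset.range (M+1), (y (2*j+1) - y (2*j))) ≤ y (2*M+1) := by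
    have h := hSyle (M+1)
    rw [show 2*(M+1) = 2*M+2 from by ring, hy22] at h
    have := hypos 0
    linarith
  have hr0 : 0 ≤ (y (2*M+1) - ∑ j ∈ Finset.range (M+1), (y (2*j+1) - y (2*j))) / y (2*M+1) :=
    div_nonneg (by linarith) (le_of_lt (hypos _))
  rw [hRR] at hpair
  have hfin : μ E = ENNReal.ofReal (Real.exp (lam *
      ((y (2*M+1) - ∑ j ∈ Finset.range (M+1), (y (2*j+1) - y (2*j))) / y (2*M+1)) - lam)) := by
    rw [hμE, hpair]
    exact poisE_sum lam hlam _ hr0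
  rw [hfin, ENNReal.toReal_ofReal (Real.exp_nonneg _)]
  congr 1
  have hSx : (∑ j ∈ Finset.range (M+1), (y (2*j+1) - y (2*j)))
      = ∑ j ∈ Finset.range (M+1), (x (2*j+1) - x (2*j)) := by
    refine Finset.sum_congr rfl fun j hj => ?_
    have hj' := Finset.mem_range.1 hj
    rw [hyeq (2*j+1) (by omega), hyeq (2*j) (by omega)]
  rw [hSx, hyK, hlam_def]
  have hne : x (2*M+1) ≠ 0 := ne_of_gt (hxpos _ le_rfl)
  field_simp
  ring
end
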